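/- Let p be a prime, let F be the algebraic closure of the field with p elements, let G = SL₂(F), and let B ≤ G be the Borel subgroup of upper triangular matrices in G (those g with lower-left entry g₂₁ = 0). Let k be a field and let V = (G/B) →₀ k be the k-vector space with basis the left coset space G/B, on which G acts by left translation of the basis vectors. Then the subspace of vectors v ∈ V satisfying b • v = v for all b ∈ B is one-dimensional; it is spanned by the basis vector corresponding to the trivial coset B. -/

import Mathlib

open Matrix

/-- The Borel subgroup of upper triangular matrices in `SL₂(R)`. -/
def upperBorel (R : Type*) [CommRing R] : Subgroup (SpecialLinearGroup (Fin 2) R) where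
  carrier := {g | (g : Matrix (Fin 2) (Fin 2) R) 1 0 = 0}
  one_mem' := by simp
  mul_mem' := by
    intro a b ha hb
    have ha' : (a : Matrix (Fin 2) (Fin 2) R) 1 0 = 0 := ha
    have hb' : (b : Matrix (Fin 2) (Fin 2) R) 1 0 = 0 := hb
    show ((a : Matrix (Fin 2) (Fin 2) R) * (b : Matrix (Fin 2) (Fin 2) R)) 1 0 = 0
    rw [Matrix.mul_apply, Fin.sum_univ_two, ha', hb']; ring
  inv_mem' := by
    intro a ha
    have ha' : (a : Matrix (Fin 2) (Fin 2) R) 1 0 = 0 := ha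
    show (Matrix.adjugate (a : Matrix (Fin 2) (Fin 2) R)) 1 0 = 0
    rw [Matrix.adjugate_fin_two]
    simp [ha']

/-!
A `B`-invariant finitely supported function on `G/B` is constant on `B`-orbits, hence vanishes
on every infinite orbit. The trivial coset is fixed by `B`; every other coset `gB` has
`g₁₀ ≠ 0`, and then the unipotent elements `u(t) = !![1, t; 0, 1]` of `B` move it to pairwise
distinct cosets, because `(g⁻¹ u(t) g)₁₀ = -t g₁₀²`. Since the algebraically closed field is
infinite, `B` has exactly one finite orbit on `G/B`.
-/

open scoped MatrixGroups

namespace Finsupp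

variable {G α k : Type*} [Group G] [MulAction G α] [AddCommMonoid k]

theorem apply_smul_of_mapDomain_smul_eq {g : G} {v : α →₀ k} (hv : mapDomain (g • ·) v = v)
    (x : α) : v (g • x) = v x := by
  conv_lhs => rw [← hv]
  exact mapDomain_apply (MulAction.injective g) v x

theorem eq_zero_of_infinite_smul_image {S : Set G} {v : α →₀ k}
    (hv : ∀ g ∈ S, mapDomain (g • ·) v = v) {x : α} (hx : ((· • x) '' S).Infinite) :
    v x = 0 := by
  by_contra hvx
  refine hx (v.support.finite_toSet.subset ?_)
  rintro _ ⟨g, hg, rfl⟩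
  rw [Finset.mem_coe, mem_support_iff, apply_smul_of_mapDomain_smul_eq (hv g hg)]
  exact hvx

end Finsupp

theorem QuotientGroup.smul_coe_one_of_mem {G : Type*} [Group G] {H : Subgroup G} {h : G}
    (hh : h ∈ H) : h • ((1 : G) : G ⧸ H) = ((1 : G) : G ⧸ H) := by
  rw [MulAction.Quotient.smul_coe, smul_eq_mul, mul_one, QuotientGroup.eq, mul_one]
  exact H.inv_mem hh

theorem Finsupp.setOf_forall_mapDomain_smul_eq_eq_span {G k : Type*} [Group G] [Semiring k]
    (H : Subgroup G)
    (hH : ∀ x : G ⧸ H, x ≠ ((1 : G) : G ⧸ H) → ((· • x) '' (H : Set G)).Infinite) :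
    {v : (G ⧸ H) →₀ k | ∀ h ∈ H, mapDomain (h • ·) v = v} =
      (Submodule.span k {single ((1 : G) : G ⧸ H) (1 : k)} : Set ((G ⧸ H) →₀ k)) := by
  ext v
  simp only [Set.mem_ofPred_eq, SetLike.mem_coe, Submodule.mem_span_singleton]
  constructor
  · intro hv
    refine ⟨v ((1 : G) : G ⧸ H), ?_⟩
    ext x
    by_cases hx : x = ((1 : G) : G ⧸ H)
    · simp [hx]
    · simp [Ne.symm hx, eq_zero_of_infinite_smul_image hv (hH x hx)]
  · rintro ⟨c, rfl⟩ h hh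
    rw [mapDomain_smul, mapDomain_single, QuotientGroup.smul_coe_one_of_mem hh]

namespace Matrix.SpecialLinearGroup

variable {R : Type*} [CommRing R]

def upperRightHom : AddChar R SL(2, R) where
  toFun t := ⟨!![1, t; 0, 1], by simp [det_fin_two_of]⟩
  map_zero_eq_one' := Subtype.ext <| by simp [one_fin_two]
  map_add_eq_mul' s t := Subtype.ext <| by
    change !![1, s + t; 0, 1] = !![1, s; 0, 1] * !![1, t; 0, 1]
    simp [add_comm]

@[simp]
theorem coe_upperRightHom (t : R) : (upperRightHom t : Matrix (Fin 2) (Fin 2) R) = !![1, t; 0, 1] :=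
  rfl

theorem upperRightHom_mem_upperBorel (t : R) : upperRightHom t ∈ upperBorel R := by
  show (upperRightHom t : Matrix (Fin 2) (Fin 2) R) 1 0 = 0
  simp

theorem conj_upperRightHom_apply_one_zero (g : SL(2, R)) (t : R) :
    (g⁻¹ * upperRightHom t * g) 1 0 = -(t * g 1 0 ^ 2) := by
  simp [adjugate_fin_two, mul_apply, Fin.sum_univ_two]
  ring

variable [IsDomain R]

theorem injective_upperRightHom_smul_mk {g : SL(2, R)} (hg : g 1 0 ≠ 0) :
    Function.Injective fun t : R => upperRightHom t • (g : SL(2, R) ⧸ upperBorel R) := by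
  intro s t hst
  have hmem : g⁻¹ * upperRightHom (t - s) * g ∈ upperBorel R := by
    simp only [MulAction.Quotient.smul_coe, smul_eq_mul, QuotientGroup.eq] at hst
    rwa [_root_.mul_inv_rev, mul_assoc, ← mul_assoc (upperRightHom s)⁻¹,
      ← AddChar.map_neg_eq_inv, ← AddChar.map_add_eq_mul, neg_add_eq_sub, ← mul_assoc] at hst
  have hsq : (t - s) * g 1 0 ^ 2 = 0 :=
    neg_eq_zero.mp ((conj_upperRightHom_apply_one_zero g (t - s)).symm.trans hmem)
  exact (sub_eq_zero.mp ((mul_eq_zero.mp hsq).resolve_right (pow_ne_zero 2 hg))).symm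

theorem infinite_upperBorel_smul_image [Infinite R] {x : SL(2, R) ⧸ upperBorel R}
    (hx : x ≠ ((1 : SL(2, R)) : SL(2, R) ⧸ upperBorel R)) :
    ((· • x) '' (upperBorel R : Set SL(2, R))).Infinite := by
  obtain ⟨g, rfl⟩ := QuotientGroup.mk_surjective x
  have hg : g 1 0 ≠ 0 := fun h =>
    hx (QuotientGroup.eq.mpr (by simpa using (upperBorel R).inv_mem h))
  refine (Set.infinite_range_of_injective (injective_upperRightHom_smul_mk hg)).mono ?_
  rintro _ ⟨t, rfl⟩
  exact ⟨_, upperRightHom_mem_upperBorel t, rfl⟩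

end Matrix.SpecialLinearGroup

/-- Remark 3.2 computation: for `G = SL₂(𝔽̄_p)`, `B` the upper-triangular Borel,
and `V = k[G/B]` (finitely supported functions, with `G` acting by left
translation of basis vectors), the `B`-fixed vectors form the one-dimensional
span of the basis vector at the trivial coset. -/
theorem stmt_8 (p : ℕ) [Fact p.Prime] (k : Type*) [Field k] :
    letI F := AlgebraicClosure (ZMod p)
    letI G := SpecialLinearGroup (Fin 2) F
    letI B := upperBorel F
    {v : (G ⧸ B) →₀ k | ∀ b ∈ B, Finsupp.mapDomain (fun x : G ⧸ B => b • x) v = v} =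
      (Submodule.span k {Finsupp.single ((1 : G) : G ⧸ B) (1 : k)} : Set ((G ⧸ B) →₀ k)) ∧
    Module.rank k
      (Submodule.span k {Finsupp.single ((1 : G) : G ⧸ B) (1 : k)}) = 1 :=
  ⟨Finsupp.setOf_forall_mapDomain_smul_eq_eq_span _
      fun _ hx => SpecialLinearGroup.infinite_upperBorel_smul_image hx,
    by rw [← Module.finrank_eq_rank,
      finrank_span_singleton (Finsupp.single_ne_zero.mpr one_ne_zero), Nat.cast_one]⟩
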